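/- Let A be a (not necessarily commutative) algebra over a field of characteristic zero, let a₁,…,aₙ be derivations of A, and let 𝔖(a₁∘…∘aₙ) denote the symmetrization (1/n!)·∑_{σ∈Sₙ} a_{σ(1)}∘…∘a_{σ(n)}. Then for all f, g ∈ A, 𝔖(a₁∘…∘aₙ)(f·g) = ∑_{(K,L)} 𝔖(a_K)(f)·𝔖(a_L)(g), where the sum runs over all ordered pairs (K,L) of disjoint subsets of {1,…,n} with K ∪ L = {1,…,n}, and a_K denotes the composition of the aᵢ with i ∈ K in increasing order. -/

import Mathlib

/-!
Write `𝔖_s` for the symmetrization of the `a_i` with `i` in a finite index set `s`. Sorting the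
orderings of `s` by their first factor gives `|s| • 𝔖_s = ∑_{j ∈ s} a_j ∘ 𝔖_{s \ {j}}`. Applying
this to `f * g`, then the induction hypothesis and the Leibniz rule for `a_j`, and regrouping by
the set `P` of indices that act on `f`, gives
`|s| • 𝔖_s (f * g) = ∑_{P ⊆ s} (|P| + |s \ P|) • 𝔖_P f * 𝔖_{s \ P} g`;
we conclude since `|P| + |s \ P| = |s|` is invertible in characteristic zero.
-/

open scoped BigOperators

/-- Symmetrization `𝔖(l)` of a list of endomorphisms: `(1/len!) · ∑_{orderings} composition`. -/
noncomputable def symList {K A : Type*} [Field K] [CharZero K] [Ring A] [Algebra K A]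
    (l : List (Module.End K A)) : Module.End K A :=
  ((l.length.factorial : K)⁻¹) • (l.permutations.map List.prod).sum

open Finset Nat

section Reindexing

variable {ι M : Type*} [DecidableEq ι] [AddCommMonoid M]

theorem Finset.sum_powerset_erase_eq_sum_filter_mem {s : Finset ι} {j : ι} (hj : j ∈ s)
    (F : Finset ι → M) :
    ∑ P ∈ (s.erase j).powerset, F P = ∑ Q ∈ s.powerset with j ∈ Q, F (Q.erase j) := by
  refine sum_nbij' (insert j) (erase · j) ?_ ?_ ?_ ?_ ?_
  · intro P hP
    simp only [mem_powerset, mem_filter, subset_erase] at hP ⊢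
    exact ⟨insert_subset hj hP.1, mem_insert_self j P⟩
  · intro Q hQ
    simp only [mem_powerset, mem_filter] at hQ ⊢
    exact erase_subset_erase j hQ.1
  · intro P hP
    simp only [mem_powerset, subset_erase] at hP
    exact erase_insert hP.2
  · intro Q hQ
    simp only [mem_filter] at hQ
    exact insert_erase hQ.2
  · intro P hP
    simp only [mem_powerset, subset_erase] at hP
    rw [erase_insert hP.2]

theorem Finset.sum_sum_powerset_erase_eq_sum_powerset_sum_erase (s : Finset ι)
    (F : ι → Finset ι → M) :
    ∑ j ∈ s, ∑ P ∈ (s.erase j).powerset, F j P =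
      ∑ Q ∈ s.powerset, ∑ j ∈ Q, F j (Q.erase j) := by
  rw [sum_congr rfl fun j hj => sum_powerset_erase_eq_sum_filter_mem hj (F j)]
  refine sum_comm' fun j Q => ?_
  simp only [mem_filter, mem_powerset]
  exact ⟨fun ⟨_, hQ, hjQ⟩ => ⟨hjQ, hQ⟩, fun ⟨hjQ, hQ⟩ => ⟨hQ hjQ, hQ, hjQ⟩⟩

theorem Finset.sum_sum_powerset_erase_eq_sum_powerset_sum_sdiff (s : Finset ι)
    (F : ι → Finset ι → M) :
    ∑ j ∈ s, ∑ P ∈ (s.erase j).powerset, F j P = ∑ P ∈ s.powerset, ∑ j ∈ s \ P, F j P := by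
  refine sum_comm' fun j P => ?_
  simp only [mem_powerset, subset_erase, mem_sdiff]
  tauto

end Reindexing

namespace List

variable {ι : Type*} [DecidableEq ι]

theorem sum_permutations_toFinset_eq_sum_cons {M : Type*} [AddCommMonoid M] {l : List ι}
    (hl : l ≠ []) (F : List ι → M) :
    ∑ π ∈ l.permutations.toFinset, F π =
      ∑ x ∈ l.toFinset, ∑ τ ∈ (l.erase x).permutations.toFinset, F (x :: τ) := by
  rw [sum_sigma']
  refine (sum_bij (fun p _ => p.1 :: p.2) ?_ ?_ ?_ fun _ _ => rfl).symm
  · rintro ⟨x, τ⟩ hp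
    simp only [Finset.mem_sigma, mem_toFinset, mem_permutations] at hp ⊢
    exact cons_perm_iff_perm_erase.2 hp
  · rintro ⟨x, τ⟩ _ ⟨y, σ⟩ _ h
    obtain ⟨rfl, rfl⟩ := cons.inj h
    rfl
  · intro π hπ
    rw [mem_toFinset, mem_permutations] at hπ
    obtain _ | ⟨x, τ⟩ := π
    · exact absurd hπ.nil_eq.symm hl
    · refine ⟨⟨x, τ⟩, ?_, rfl⟩
      simpa only [Finset.mem_sigma, mem_toFinset, mem_permutations] using
        cons_perm_iff_perm_erase.1 hπ

end List

section PermSum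

variable {R : Type*} [Semiring R]

def permSum (l : List R) : R := (l.permutations.map List.prod).sum

theorem permSum_perm {l l' : List R} (h : l.Perm l') : permSum l = permSum l' :=
  (h.permutations.map _).sum_eq

variable {ι : Type*} [DecidableEq ι]

theorem permSum_map_of_nodup (a : ι → R) {l : List ι} (hl : l.Nodup) :
    permSum (l.map a) = ∑ π ∈ l.permutations.toFinset, (π.map a).prod := by
  rw [List.sum_toFinset _ (List.nodup_permutations l hl), permSum, ← List.map_permutations,
    List.map_map]
  rfl

theorem permSum_map_eq_sum_mul (a : ι → R) {l : List ι} (hl : l.Nodup) (hne : l ≠ []) :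
    permSum (l.map a) = ∑ x ∈ l.toFinset, a x * permSum ((l.erase x).map a) := by
  simp only [permSum_map_of_nodup a hl, permSum_map_of_nodup a (hl.erase _),
    List.sum_permutations_toFinset_eq_sum_cons hne, mul_sum, List.map_cons, List.prod_cons]

end PermSum

theorem Finset.sort_erase_perm {ι : Type*} [LinearOrder ι] (s : Finset ι) (x : ι) :
    ((s.sort (· ≤ ·)).erase x).Perm ((s.erase x).sort (· ≤ ·)) := by
  rw [← Multiset.coe_eq_coe, ← Multiset.coe_erase, sort_eq, sort_eq, erase_val]

section Symmetrization

variable {K A ι : Type*} [Field K] [CharZero K] [Ring A] [Algebra K A] [LinearOrder ι]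

noncomputable def symFinset (a : ι → Module.End K A) (s : Finset ι) : Module.End K A :=
  symList ((s.sort (· ≤ ·)).map a)

theorem factorial_smul_symFinset (a : ι → Module.End K A) (s : Finset ι) :
    (s.card ! : K) • symFinset a s = permSum ((s.sort (· ≤ ·)).map a) := by
  rw [symFinset, symList, List.length_map, length_sort,
    smul_inv_smul₀ (cast_ne_zero.2 (factorial_ne_zero _))]
  rfl

theorem card_smul_symFinset (a : ι → Module.End K A) (s : Finset ι) :
    (s.card : K) • symFinset a s = ∑ j ∈ s, a j * symFinset a (s.erase j) := by
  obtain rfl | hs := s.eq_empty_or_nonempty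
  · simp
  obtain ⟨m, hm⟩ := exists_eq_add_one_of_ne_zero (card_ne_zero.2 hs)
  have hsort : s.sort (· ≤ ·) ≠ [] := by
    rw [Ne, ← List.length_eq_zero_iff, length_sort]
    exact card_ne_zero.2 hs
  have hm0 : (m ! : K) ≠ 0 := cast_ne_zero.2 (factorial_ne_zero m)
  refine smul_right_injective _ hm0 ?_
  calc (m ! : K) • (s.card : K) • symFinset a s
      = (s.card ! : K) • symFinset a s := by
        rw [smul_smul, hm, factorial_succ]; push_cast; ring_nf
    _ = ∑ j ∈ s, a j * permSum (((s.erase j).sort (· ≤ ·)).map a) := by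
        rw [factorial_smul_symFinset, permSum_map_eq_sum_mul a (sort_nodup _ _) hsort,
          sort_toFinset]
        exact sum_congr rfl fun j _ => congrArg _ (permSum_perm ((s.sort_erase_perm j).map a))
    _ = ∑ j ∈ s, a j * ((m ! : K) • symFinset a (s.erase j)) := by
        refine sum_congr rfl fun j hj => ?_
        rw [← factorial_smul_symFinset, card_erase_of_mem hj, hm, Nat.add_sub_cancel]
    _ = (m ! : K) • ∑ j ∈ s, a j * symFinset a (s.erase j) := by
        simp only [mul_smul_comm, smul_sum]

theorem card_smul_symFinset_apply (a : ι → Module.End K A) (s : Finset ι) (x : A) :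
    (s.card : K) • symFinset a s x = ∑ j ∈ s, a j (symFinset a (s.erase j) x) := by
  simpa using LinearMap.congr_fun (card_smul_symFinset a s) x

theorem symFinset_apply_mul (a : ι → Module.End K A)
    (ha : ∀ i f g, a i (f * g) = a i f * g + f * a i g) (s : Finset ι) (f g : A) :
    symFinset a s (f * g) = ∑ P ∈ s.powerset, symFinset a P f * symFinset a (s \ P) g := by
  induction s using Finset.strongInduction with
  | H s ih =>
  obtain rfl | hs := s.eq_empty_or_nonempty
  · simp [symFinset, symList]
  have hcard : (s.card : K) ≠ 0 := cast_ne_zero.2 (card_ne_zero.2 hs)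
  refine smul_right_injective A hcard ?_
  calc (s.card : K) • symFinset a s (f * g)
      = ∑ j ∈ s, ∑ P ∈ (s.erase j).powerset,
          (a j (symFinset a P f) * symFinset a (s.erase j \ P) g +
            symFinset a P f * a j (symFinset a (s.erase j \ P) g)) := by
        rw [card_smul_symFinset_apply]
        refine sum_congr rfl fun j hj => ?_
        rw [ih _ (erase_ssubset hj), map_sum]
        exact sum_congr rfl fun P _ => ha j _ _
    _ = ∑ P ∈ s.powerset,
          ((∑ j ∈ P, a j (symFinset a (P.erase j) f)) * symFinset a (s \ P) g +
          symFinset a P f * ∑ j ∈ s \ P, a j (symFinset a ((s \ P).erase j) g)) := by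
        simp only [sum_add_distrib, sum_mul, mul_sum]
        rw [sum_sum_powerset_erase_eq_sum_powerset_sum_erase,
          sum_sum_powerset_erase_eq_sum_powerset_sum_sdiff]
        congr 1
        · refine sum_congr rfl fun P _ => sum_congr rfl fun j hj => ?_
          rw [← erase_sdiff_distrib, erase_eq_of_notMem (notMem_sdiff_of_mem_right hj)]
        · simp only [erase_sdiff_comm]
    _ = ∑ P ∈ s.powerset, (((P.card : K) • symFinset a P f) * symFinset a (s \ P) g +
          symFinset a P f * (((s \ P).card : K) • symFinset a (s \ P) g)) := by
        simp only [card_smul_symFinset_apply]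
    _ = (s.card : K) • ∑ P ∈ s.powerset, symFinset a P f * symFinset a (s \ P) g := by
        rw [smul_sum]
        refine sum_congr rfl fun P hP => ?_
        rw [smul_mul_assoc, mul_smul_comm, ← add_smul, ← cast_add,
          add_comm, card_sdiff_add_card_eq_card (mem_powerset.1 hP)]

end Symmetrization

theorem stmt0 {K A : Type*} [Field K] [CharZero K] [Ring A] [Algebra K A]
    (n : ℕ) (a : Fin n → Module.End K A)
    (hderiv : ∀ i, ∀ f g : A, a i (f * g) = a i f * g + f * a i g)
    (f g : A) :
    symList ((List.finRange n).map a) (f * g) =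
      ∑ K : Finset (Fin n),
        symList ((K.sort (· ≤ ·)).map a) f * symList ((Kᶜ.sort (· ≤ ·)).map a) g := by
  have h := symFinset_apply_mul a hderiv univ f g
  rw [symFinset, Fin.sort_univ, powerset_univ] at h
  simp only [← compl_eq_univ_sdiff] at h
  exact h
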